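/- arXiv:2305.06302 — 5 statements merged into one kernel-verified Lean document; each statement's English description precedes it below -/
import Mathlib

section
/- In the parabolic case a = 1, c = 0, the maps f_±(ξ) = ±√(r·ξ + 1) map the interval B = [−ξ_max, ξ_max] into B \ {0} whenever |r| < 1/√2, where ξ_max = (|r| + √(r²+4))/2. In particular, the radicand r·ξ + 1 is strictly positive for all ξ ∈ B when |r| < 1/√2. -/
/-- Parabolic case `a = 1, c = 0`: for `|r| < 1/√2`, the radicand `r·ξ + 1` is strictly
positive on `B = [−ξ_max, ξ_max]` and both branches `f_±(ξ) = ±√(r·ξ + 1)` map `B` into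
`B \ {0}`, where `ξ_max = (|r| + √(r²+4))/2`. -/
theorem parabolic_maps_into (r : ℝ) (hr : |r| < 1 / Real.sqrt 2) :
    ∀ ξ ∈ Set.Icc (-((|r| + Real.sqrt (r ^ 2 + 4)) / 2)) ((|r| + Real.sqrt (r ^ 2 + 4)) / 2),
      0 < r * ξ + 1 ∧
      Real.sqrt (r * ξ + 1) ∈
        Set.Icc (-((|r| + Real.sqrt (r ^ 2 + 4)) / 2)) ((|r| + Real.sqrt (r ^ 2 + 4)) / 2)
          \ {0} ∧
      -Real.sqrt (r * ξ + 1) ∈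
        Set.Icc (-((|r| + Real.sqrt (r ^ 2 + 4)) / 2)) ((|r| + Real.sqrt (r ^ 2 + 4)) / 2)
          \ {0} := by
  intro ξ hξ
  set s := Real.sqrt (r ^ 2 + 4) with hs
  have hs0 : 0 ≤ s := Real.sqrt_nonneg _
  have hs2 : s ^ 2 = r ^ 2 + 4 := Real.sq_sqrt (by positivity)
  have h2 : (Real.sqrt 2) ^ 2 = 2 := Real.sq_sqrt (by norm_num)
  have h2pos : 0 < Real.sqrt 2 := Real.sqrt_pos.mpr (by norm_num)
  have hr' : |r| * Real.sqrt 2 < 1 := (lt_div_iff₀ h2pos).mp hr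
  have hr2 : r ^ 2 < 1 / 2 := by
    nlinarith [abs_nonneg r, sq_abs r, mul_nonneg (abs_nonneg r) h2pos.le]
  have hs3 : s * Real.sqrt 2 < 3 := by
    nlinarith [mul_nonneg hs0 h2pos.le]
  set m := (|r| + s) / 2 with hm
  have hm0 : 0 ≤ m := by positivity
  have hmeq : m ^ 2 = |r| * m + 1 := by
    have := sq_abs r
    field_simp [hm]
    nlinarith [sq_abs r]
  have hkey : |r| * m < 1 := by
    have h1 : 2 * (|r| * s) = (|r| * Real.sqrt 2) * (s * Real.sqrt 2) := by
      linear_combination (-(|r| * s)) * h2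
    nlinarith [mul_nonneg (abs_nonneg r) h2pos.le, mul_nonneg hs0 h2pos.le, sq_abs r]
  have hξm : |ξ| ≤ m := abs_le.mpr (Set.mem_Icc.mp hξ)
  have hrξ : |r * ξ| ≤ |r| * m := by
    rw [abs_mul]; exact mul_le_mul_of_nonneg_left hξm (abs_nonneg r)
  have hpos : 0 < r * ξ + 1 := by
    have := neg_abs_le (r * ξ); linarith
  have hub : r * ξ + 1 ≤ m ^ 2 := by
    have := le_abs_self (r * ξ); linarith
  have hsqrt_le : Real.sqrt (r * ξ + 1) ≤ m := by
    calc Real.sqrt (r * ξ + 1) ≤ Real.sqrt (m ^ 2) := Real.sqrt_le_sqrt hub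
    _ = m := by rw [Real.sqrt_sq hm0]
  have hsqrt_pos : 0 < Real.sqrt (r * ξ + 1) := Real.sqrt_pos.mpr hpos
  refine ⟨hpos, ⟨Set.mem_Icc.mpr ⟨by linarith, hsqrt_le⟩, ?_⟩,
    ⟨Set.mem_Icc.mpr ⟨by linarith, by linarith⟩, ?_⟩⟩
  · simp only [Set.mem_singleton_iff]; exact hsqrt_pos.ne'
  · simp only [Set.mem_singleton_iff]
    intro h
    rw [neg_eq_zero] at h
    exact hsqrt_pos.ne' h
end

section
/- For a = 1, c = 0 and 0 < |r| < √((20 − 8√5)/5), the point ξ* = r/4 − 1/r lies outside the interval [−ξ_max, ξ_max] with ξ_max = (|r| + √(r²+4))/2; equivalently, the polynomial inequality 16 − 40r² + 5r⁴ > 0 holds and implies |f_±'(ξ)| < 1 on the whole interval. -/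
/-- For `a = 1, c = 0` and `0 < |r| < √((20 − 8√5)/5)`: the point `ξ* = r/4 − 1/r` lies
outside `[−ξ_max, ξ_max]` with `ξ_max = (|r| + √(r²+4))/2`, the polynomial inequality
`16 − 40r² + 5r⁴ > 0` holds, and `|f_±'(ξ)| = |r/(2√(r·ξ+1))| < 1` on the whole interval. -/
theorem parabolic_R1_region (r : ℝ) (hr0 : 0 < |r|)
    (hr : |r| < Real.sqrt ((20 - 8 * Real.sqrt 5) / 5)) :
    (r / 4 - 1 / r) ∉
      Set.Icc (-((|r| + Real.sqrt (r ^ 2 + 4)) / 2)) ((|r| + Real.sqrt (r ^ 2 + 4)) / 2) ∧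
    16 - 40 * r ^ 2 + 5 * r ^ 4 > 0 ∧
    ∀ ξ ∈ Set.Icc (-((|r| + Real.sqrt (r ^ 2 + 4)) / 2)) ((|r| + Real.sqrt (r ^ 2 + 4)) / 2),
      0 < r * ξ + 1 → |r / (2 * Real.sqrt (r * ξ + 1))| < 1 := by
  have h5 : Real.sqrt 5 ^ 2 = 5 := Real.sq_sqrt (by norm_num)
  have h5lb : 2 < Real.sqrt 5 := by nlinarith [Real.sqrt_nonneg 5]
  have h5ub : Real.sqrt 5 < 5 / 2 := by nlinarith [Real.sqrt_nonneg 5]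
  have hnn : (0:ℝ) ≤ (20 - 8 * Real.sqrt 5) / 5 := by nlinarith
  have hr2 : r ^ 2 < (20 - 8 * Real.sqrt 5) / 5 := by
    calc r ^ 2 = |r| ^ 2 := (sq_abs r).symm
      _ < Real.sqrt ((20 - 8 * Real.sqrt 5) / 5) ^ 2 :=
          pow_lt_pow_left₀ hr (abs_nonneg r) two_ne_zero
      _ = (20 - 8 * Real.sqrt 5) / 5 := Real.sq_sqrt hnn
  have hP : (0:ℝ) < 16 - 40 * r ^ 2 + 5 * r ^ 4 := by
    nlinarith [sq_nonneg (r ^ 2), mul_pos (sub_pos.2 hr2)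
      (show (0:ℝ) < 4 + 8 * Real.sqrt 5 / 5 - r ^ 2 by nlinarith)]
  set q := Real.sqrt (r ^ 2 + 4) with hqdef
  have hq2 : q ^ 2 = r ^ 2 + 4 := Real.sq_sqrt (by positivity)
  have hq0 : 0 ≤ q := Real.sqrt_nonneg _
  have h43 : 0 < 4 - 3 * r ^ 2 := by nlinarith
  have hK : 2 * |r| * q < 4 - 3 * r ^ 2 := by
    have hsq : (2 * |r| * q) ^ 2 < (4 - 3 * r ^ 2) ^ 2 := by
      have : (2 * |r| * q) ^ 2 = 4 * r ^ 2 * (r ^ 2 + 4) := by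
        rw [mul_pow, mul_pow, sq_abs, hq2]; ring
      nlinarith
    exact lt_of_pow_lt_pow_left₀ 2 h43.le hsq
  have hrne : r ≠ 0 := by
    intro h; rw [h, abs_zero] at hr0; exact lt_irrefl 0 hr0
  refine ⟨?_, hP, ?_⟩
  · intro hmem
    obtain ⟨h1, h2⟩ := hmem
    rcases hrne.lt_or_gt with hneg | hpos
    · -- r < 0 : ξ* > ξmax, contradicting h2
      have habs : |r| = -r := abs_of_neg hneg
      rw [habs] at h2
      have h2' : r * (r / 4 - 1 / r) ≥ r * ((-r + q) / 2) :=
        mul_le_mul_of_nonpos_left h2 hneg.le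
      have : r * (r / 4 - 1 / r) = r ^ 2 / 4 - 1 := by field_simp
      nlinarith [hK, habs]
    · have habs : |r| = r := abs_of_pos hpos
      rw [habs] at h1
      have h1' : r * (-((r + q) / 2)) ≤ r * (r / 4 - 1 / r) :=
        mul_le_mul_of_nonneg_left h1 hpos.le
      have : r * (r / 4 - 1 / r) = r ^ 2 / 4 - 1 := by field_simp
      nlinarith [hK, habs]
  · intro ξ hξ hpos
    set u := Real.sqrt (r * ξ + 1) with hudef
    have hu0 : 0 < u := Real.sqrt_pos.2 hpos
    have hu2 : u ^ 2 = r * ξ + 1 := Real.sq_sqrt hpos.le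
    have hξabs : |ξ| ≤ (|r| + q) / 2 := abs_le.2 hξ
    have hrξ : -( |r| * ((|r| + q) / 2)) ≤ r * ξ := by
      have h1 : |r * ξ| ≤ |r| * ((|r| + q) / 2) := by
        rw [abs_mul]
        exact mul_le_mul_of_nonneg_left hξabs (abs_nonneg r)
      linarith [(abs_le.1 h1).1]
    have hkey : r ^ 2 < (2 * u) ^ 2 := by
      have : (2 * u) ^ 2 = 4 * (r * ξ + 1) := by rw [mul_pow, hu2]; ring
      rw [this]
      nlinarith [hK, sq_abs r]
    have habs : |r| < 2 * u := by
      have : |r| ^ 2 < (2 * u) ^ 2 := by rw [sq_abs]; exact hkey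
      exact lt_of_pow_lt_pow_left₀ 2 (by linarith) this
    rw [abs_div, abs_of_pos (by linarith : (0:ℝ) < 2 * u)]
    rw [div_lt_one (by linarith)]
    exact habs
end

section
/- The discriminant of the cubic polynomial P(c) = 64c³ + 32(r² − 2)c² + (r² − 4)(5r² − 4)c − 4r⁴ in c equals 2⁸·r²·(r² + 4)⁴·(8 − 25r²), and hence is strictly positive whenever 0 < |r| < 2√2/5. In particular, for 0 < |r| < 2√2/5 the polynomial P has three distinct real roots. -/
/-- The discriminant of the cubic `P(c) = 64c³ + 32(r²−2)c² + (r²−4)(5r²−4)c − 4r⁴`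
equals `2⁸·r²·(r²+4)⁴·(8 − 25r²)`; hence it is positive for `0 < |r| < 2√2/5`,
and then `P` has three distinct real roots. -/
theorem cubic_discriminant (r : ℝ) :
    (18 * 64 * (32 * (r ^ 2 - 2)) * ((r ^ 2 - 4) * (5 * r ^ 2 - 4)) * (-4 * r ^ 4)
      - 4 * (32 * (r ^ 2 - 2)) ^ 3 * (-4 * r ^ 4)
      + (32 * (r ^ 2 - 2)) ^ 2 * ((r ^ 2 - 4) * (5 * r ^ 2 - 4)) ^ 2
      - 4 * 64 * ((r ^ 2 - 4) * (5 * r ^ 2 - 4)) ^ 3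
      - 27 * 64 ^ 2 * (-4 * r ^ 4) ^ 2)
    = 2 ^ 8 * r ^ 2 * (r ^ 2 + 4) ^ 4 * (8 - 25 * r ^ 2) ∧
    (0 < |r| → |r| < 2 * Real.sqrt 2 / 5 →
      0 < 2 ^ 8 * r ^ 2 * (r ^ 2 + 4) ^ 4 * (8 - 25 * r ^ 2) ∧
      ∃ c₁ c₂ c₃ : ℝ, c₁ ≠ c₂ ∧ c₁ ≠ c₃ ∧ c₂ ≠ c₃ ∧
        (∀ c ∈ ({c₁, c₂, c₃} : Set ℝ),
          64 * c ^ 3 + 32 * (r ^ 2 - 2) * c ^ 2 + (r ^ 2 - 4) * (5 * r ^ 2 - 4) * c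
            - 4 * r ^ 4 = 0)) := by
  constructor
  · ring
  · intro h1 h2
    have hr0 : 0 < r ^ 2 := by
      have := pow_pos h1 2
      rwa [sq_abs] at this
    have ht : r ^ 2 < 8 / 25 := by
      have hs : Real.sqrt 2 ^ 2 = 2 := Real.sq_sqrt (by norm_num)
      have h2' : |r| ^ 2 < (2 * Real.sqrt 2 / 5) ^ 2 :=
        pow_lt_pow_left₀ h2 (abs_nonneg r) two_ne_zero
      rw [sq_abs] at h2'
      nlinarith [h2']
    have h8 : 0 < 8 - 25 * r ^ 2 := by linarith
    refine ⟨by positivity, ?_⟩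
    set f : ℝ → ℝ := fun c => 64 * c ^ 3 + 32 * (r ^ 2 - 2) * c ^ 2
        + (r ^ 2 - 4) * (5 * r ^ 2 - 4) * c - 4 * r ^ 4 with hfdef
    have hf : Continuous f := by fun_prop
    have f0 : f 0 < 0 := by
      simp only [hfdef]
      nlinarith [pow_pos hr0 2]
    have f10 : 0 < f (1/10) := by
      simp only [hfdef]
      nlinarith [mul_pos (by linarith : (0:ℝ) < 8/25 - r ^ 2)
        (by nlinarith : (0:ℝ) < r ^ 2 + 32/35)]
    have f12 : f (1/2) < 0 := by
      simp only [hfdef]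
      nlinarith [pow_pos hr0 2]
    have f1 : 0 < f 1 := by
      simp only [hfdef]
      nlinarith [sq_nonneg (r ^ 2 + 4)]
    obtain ⟨c₁, hc₁m, hc₁⟩ := intermediate_value_Ioo (by norm_num : (0:ℝ) ≤ 1/10)
      hf.continuousOn (Set.mem_Ioo.mpr ⟨f0, f10⟩)
    obtain ⟨c₂, hc₂m, hc₂⟩ := intermediate_value_Ioo' (by norm_num : (1/10:ℝ) ≤ 1/2)
      hf.continuousOn (Set.mem_Ioo.mpr ⟨f12, f10⟩)
    obtain ⟨c₃, hc₃m, hc₃⟩ := intermediate_value_Ioo (by norm_num : (1/2:ℝ) ≤ 1)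
      hf.continuousOn (Set.mem_Ioo.mpr ⟨f12, f1⟩)
    refine ⟨c₁, c₂, c₃, ?_, ?_, ?_, ?_⟩
    · exact ne_of_lt (lt_trans hc₁m.2 hc₂m.1)
    · exact ne_of_lt (lt_trans (lt_trans hc₁m.2 hc₂m.1) (lt_trans hc₂m.2 hc₃m.1))
    · exact ne_of_lt (lt_trans hc₂m.2 hc₃m.1)
    · rintro c (rfl | rfl | rfl)
      · exact hc₁
      · exact hc₂
      · exact hc₃
end

section
/- For c > 1 and a = 1 − c, the backwards map g_s(ξ) = (r + s·√(r² + 4c + 4c(c−1)ξ²))/(2c) (with s ∈ {−1, +1}) is a contraction on ℝ: its derivative satisfies |g_s'(ξ)| ≤ √((c−1)/c) < 1 for all ξ. -/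
/-- For `c > 1`, the backwards map `g_s` has derivative bounded in absolute value by
`√((c−1)/c) < 1` for all `ξ`: `|s·2(c−1)ξ/√(r² + 4c + 4c(c−1)ξ²)| ≤ √((c−1)/c) < 1`. -/
theorem backwards_map_contraction (r c : ℝ) (hc : 1 < c) :
    Real.sqrt ((c - 1) / c) < 1 ∧
    ∀ s : ℝ, s = 1 ∨ s = -1 → ∀ ξ : ℝ,
      |s * 2 * (c - 1) * ξ / Real.sqrt (r ^ 2 + 4 * c + 4 * c * (c - 1) * ξ ^ 2)|
        ≤ Real.sqrt ((c - 1) / c) := by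
  have hc0 : (0:ℝ) < c := by linarith
  have hc1 : (0:ℝ) < c - 1 := by linarith
  constructor
  · have : (c - 1) / c < 1 := by
      rw [div_lt_one hc0]; linarith
    calc Real.sqrt ((c - 1) / c) < Real.sqrt 1 := by
          apply Real.sqrt_lt_sqrt (by positivity) this
      _ = 1 := Real.sqrt_one
  · intro s hs ξ
    set D := r ^ 2 + 4 * c + 4 * c * (c - 1) * ξ ^ 2 with hD
    have hDnn : 0 ≤ D := by positivity
    have habs : |s * 2 * (c - 1) * ξ| = 2 * (c - 1) * |ξ| := by
      rcases hs with h | h <;> subst h <;>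
        simp [abs_mul, abs_of_pos hc1, abs_of_pos (by norm_num : (0:ℝ) < 2)] <;> ring
    rw [abs_div, habs, abs_of_nonneg (Real.sqrt_nonneg D)]
    rw [div_le_iff₀' (by
      apply Real.sqrt_pos.mpr
      have : 0 < 4 * c * (c - 1) * ξ ^ 2 + (r ^ 2 + 4 * c) := by positivity
      rw [hD]; nlinarith [sq_nonneg r, sq_nonneg ξ])]
    calc 2 * (c - 1) * |ξ| = Real.sqrt (4 * (c-1)^2 * ξ^2) := by
          rw [show 4 * (c-1)^2 * ξ^2 = (2 * (c-1) * |ξ|)^2 by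
            rw [mul_pow, mul_pow, sq_abs]; ring]
          rw [Real.sqrt_sq (by positivity)]
      _ ≤ Real.sqrt ((c - 1) / c * D) := by
          apply Real.sqrt_le_sqrt
          rw [hD]
          rw [div_mul_eq_mul_div, le_div_iff₀ hc0]
          nlinarith [sq_nonneg r, sq_nonneg ξ]
      _ = Real.sqrt ((c - 1) / c) * Real.sqrt D := Real.sqrt_mul (by positivity) D
      _ = Real.sqrt D * Real.sqrt ((c - 1) / c) := mul_comm _ _
end

section
/- Let B ⊂ ℝ be nonempty and compact, and suppose f_+, f_− : B → B satisfy f_±(B) ⊆ B. Suppose there exists n ∈ ℕ such that every n-fold composition f_{s_n} ∘ ⋯ ∘ f_{s_1} (with each s_i ∈ {+,−}) is Lipschitz on B with constant K < 1. Then for every bi-infinite symbol sequence s : ℤ → {+,−} there exists a unique bi-infinite sequence ξ : ℤ → B with ξ_t = f_{s_t}(ξ_{t−1}) for all t ∈ ℤ. -/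
/-- `n`-fold composition of maps `f b` along a list of symbols. -/
def compList (f : Bool → ℝ → ℝ) : List Bool → ℝ → ℝ
  | [], x => x
  | b :: l, x => f b (compList f l x)

/-- Window of `m` symbols ending at time `t`. -/
def win (s : ℤ → Bool) : ℕ → ℤ → List Bool
  | 0, _ => []
  | m + 1, t => s t :: win s m (t - 1)

lemma win_length (s : ℤ → Bool) : ∀ m t, (win s m t).length = m
  | 0, _ => rfl
  | m + 1, t => by simp [win, win_length s m (t - 1)]

/-- Any function `ℤ → ℝ` with uniformly bounded differences as a bounded continuous function. -/
def mkBcf (g : ℤ → ℝ) (C : ℝ) (h : ∀ x y, dist (g x) (g y) ≤ C) :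
    BoundedContinuousFunction ℤ ℝ :=
  BoundedContinuousFunction.mkOfBound ⟨g, continuous_of_discreteTopology⟩ C h

@[simp] lemma mkBcf_apply (g : ℤ → ℝ) (C : ℝ) (h : ∀ x y, dist (g x) (g y) ≤ C) (t : ℤ) :
    mkBcf g C h t = g t := rfl

/-- Contraction lemma: if `B ⊆ ℝ` is nonempty compact, `f_+, f_−` map `B` into `B`, and
every `n`-fold composition is Lipschitz on `B` with constant `K < 1`, then for every
bi-infinite symbol sequence `s : ℤ → Bool` there is a unique bi-infinite sequence
`ξ : ℤ → B` with `ξ_t = f_{s_t}(ξ_{t−1})` for all `t`. -/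
theorem ai_contraction_bijection (B : Set ℝ) (hB : B.Nonempty) (hBc : IsCompact B)
    (f : Bool → ℝ → ℝ) (hf : ∀ b, Set.MapsTo (f b) B B)
    (n : ℕ) (K : ℝ) (hK0 : 0 ≤ K) (hK : K < 1)
    (hlip : ∀ l : List Bool, l.length = n → ∀ x ∈ B, ∀ y ∈ B,
      |compList f l x - compList f l y| ≤ K * |x - y|) :
    ∀ s : ℤ → Bool, ∃! ξ : ℤ → ℝ,
      (∀ t, ξ t ∈ B) ∧ ∀ t : ℤ, ξ t = f (s t) (ξ (t - 1)) := by
  intro s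
  classical
  obtain ⟨b0, hb0⟩ := hB
  -- bound on B
  obtain ⟨C, hC⟩ := hBc.isBounded.subset_closedBall 0
  have hbound : ∀ g : ℤ → ℝ, (∀ t, g t ∈ B) → ∀ x y, dist (g x) (g y) ≤ C + C := by
    intro g hg x y
    have hx := hC (hg x); have hy := hC (hg y)
    simp only [Metric.mem_closedBall] at hx hy
    calc dist (g x) (g y) ≤ dist (g x) 0 + dist 0 (g y) := dist_triangle _ _ _
      _ ≤ C + C := add_le_add hx (by rwa [dist_comm])
  set S : Set (BoundedContinuousFunction ℤ ℝ) := {g | ∀ t, g t ∈ B} with hS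
  have hSclosed : IsClosed S := by
    have : S = ⋂ t, (fun g : BoundedContinuousFunction ℤ ℝ => g t) ⁻¹' B := by
      ext g; simp [hS, Set.mem_iInter]
    rw [this]
    exact isClosed_iInter fun t =>
      hBc.isClosed.preimage (continuous_eval_const t)
  haveI : CompleteSpace S := hSclosed.completeSpace_coe
  haveI : Nonempty S :=
    ⟨⟨mkBcf (fun _ => b0) (C + C) (hbound _ fun _ => hb0), fun _ => hb0⟩⟩
  -- the shift-composition map
  set F : S → S := fun ξ =>
    ⟨mkBcf (fun t => f (s t) (ξ.1 (t - 1))) (C + C) (hbound _ fun t => hf _ (ξ.2 (t - 1))),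
      fun t => hf _ (ξ.2 (t - 1))⟩ with hF
  have hFapp : ∀ (ξ : S) t, (F ξ).1 t = f (s t) (ξ.1 (t - 1)) := fun _ _ => rfl
  -- iterate formula
  have hiter : ∀ (m : ℕ) (ξ : S) (t : ℤ),
      (F^[m] ξ).1 t = compList f (win s m t) (ξ.1 (t - m)) := by
    intro m
    induction m with
    | zero => intro ξ t; simp [win, compList]
    | succ m ih =>
      intro ξ t
      rw [Function.iterate_succ_apply']
      rw [hFapp, ih ξ (t - 1)]
      show compList f (s t :: win s m (t - 1)) (ξ.1 (t - 1 - m)) = _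
      have : t - 1 - (m : ℤ) = t - (m + 1 : ℕ) := by push_cast; ring
      rw [this]
      rfl
  -- contraction
  have hdist : ∀ ξ η : S, dist (F^[n] ξ) (F^[n] η) ≤ K * dist ξ η := by
    intro ξ η
    rw [Subtype.dist_eq]
    refine BoundedContinuousFunction.dist_le (mul_nonneg hK0 dist_nonneg) |>.2 fun t => ?_
    rw [hiter n ξ t, hiter n η t, Real.dist_eq]
    calc |compList f (win s n t) (ξ.1 (t - n)) - compList f (win s n t) (η.1 (t - n))|
        ≤ K * |ξ.1 (t - n) - η.1 (t - n)| :=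
          hlip _ (win_length s n t) _ (ξ.2 _) _ (η.2 _)
      _ ≤ K * dist ξ η := by
          refine mul_le_mul_of_nonneg_left ?_ hK0
          rw [← Real.dist_eq]
          calc dist (ξ.1 (t - n)) (η.1 (t - n)) ≤ dist ξ.1 η.1 :=
                BoundedContinuousFunction.dist_coe_le_dist _
            _ = dist ξ η := (Subtype.dist_eq ξ η).symm
  have hcontr : ContractingWith ⟨K, hK0⟩ (F^[n]) :=
    ⟨by exact_mod_cast hK, LipschitzWith.of_dist_le_mul hdist⟩
  -- fixed point of F
  have hfix : Function.IsFixedPt F (hcontr.fixedPoint F^[n]) :=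
    ContractingWith.isFixedPt_fixedPoint_iterate hcontr
  set Ξ : S := hcontr.fixedPoint F^[n] with hΞ
  refine ⟨fun t => Ξ.1 t, ⟨fun t => Ξ.2 t, fun t => ?_⟩, ?_⟩
  · conv_lhs => rw [← hfix]
    exact hFapp Ξ t
  · rintro η ⟨hη1, hη2⟩
    set H : S := ⟨mkBcf η (C + C) (hbound _ hη1), hη1⟩ with hH
    have hHfix : Function.IsFixedPt F H := by
      apply Subtype.ext
      ext t
      rw [hFapp]
      exact (hη2 t).symm
    have : H = Ξ := hcontr.fixedPoint_unique (hHfix.iterate n)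
    funext t
    exact congrArg (fun g : S => g.1 t) this
end
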